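/- Definition 4 satisfies the Syntactic Explicit Use property: if X is a variable of the program p, the random variable X is a perfect proxy for Z, and X is an influential input of p (i.e., there exist values x, x₁, x₂ of the remaining inputs and of X with ⟦p⟧(x, x₁) ≠ ⟦p⟧(x, x₂)), then p has proxy use of Z in the sense of Definition 4. -/
import Mathlib


namespace UsePrivacy

/-- Probability of an event under a discrete distribution. -/
noncomputable def pr {Ω : Type*} (μ : PMF Ω) (s : Set Ω) : ℝ :=
  (μ.toOuterMeasure s).toReal

/-- `X` is a perfect proxy for `Z`. -/
def PerfectProxy {Ω α β : Type*} (μ : PMF Ω) (X : Ω → α) (Z : Ω → β) : Prop :=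
  ∃ (f : α → β) (g : β → α),
    pr μ {ω | Z ω = f (X ω)} = 1 ∧ pr μ {ω | g (Z ω) = X ω} = 1

/-! The expression language: programs `p = λ x₁,…,xₙ. e` built from real constants,
variables, arithmetic operations, Boolean operations, relational operations and
if-then-else. -/

mutual
inductive AExp : ℕ → Type
  | const {n : ℕ} : ℝ → AExp n
  | var {n : ℕ} : Fin n → AExp n
  | add {n : ℕ} : AExp n → AExp n → AExp n
  | mul {n : ℕ} : AExp n → AExp n → AExp n
  | ite {n : ℕ} : BExp n → AExp n → AExp n → AExp n
inductive BExp : ℕ → Type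
  | tt {n : ℕ} : BExp n
  | not {n : ℕ} : BExp n → BExp n
  | and {n : ℕ} : BExp n → BExp n → BExp n
  | le {n : ℕ} : AExp n → AExp n → BExp n
end

noncomputable section

-- `⟦p⟧`: the denotation (the function computed by the program).
mutual
def AExp.eval : {n : ℕ} → AExp n → (Fin n → ℝ) → ℝ
  | _, .const c, _ => c
  | _, .var i, v => v i
  | _, .add a b, v => a.eval v + b.eval v
  | _, .mul a b, v => a.eval v * b.eval v
  | _, .ite c a b, v => if c.eval v then a.eval v else b.eval v
def BExp.eval : {n : ℕ} → BExp n → (Fin n → ℝ) → Bool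
  | _, .tt, _ => true
  | _, .not b, v => ! b.eval v
  | _, .and a b, v => a.eval v && b.eval v
  | _, .le a b, v => decide (a.eval v ≤ b.eval v)
end

-- `[q/u]p`: substitution of the program `q` for the fresh (last) variable `u` of `p`.
mutual
def AExp.subst : {n : ℕ} → AExp (n + 1) → AExp n → AExp n
  | _, .const c, _ => .const c
  | _, .var i, q => Fin.lastCases q (fun j => AExp.var j) i
  | _, .add a b, q => .add (a.subst q) (b.subst q)
  | _, .mul a b, q => .mul (a.subst q) (b.subst q)
  | _, .ite c a b, q => .ite (c.subst q) (a.subst q) (b.subst q)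
def BExp.subst : {n : ℕ} → BExp (n + 1) → AExp n → BExp n
  | _, .tt, _ => .tt
  | _, .not b, q => .not (b.subst q)
  | _, .and a b, q => .and (a.subst q) (b.subst q)
  | _, .le a b, q => .le (a.subst q) (b.subst q)
end

/-- The random variable `⟦p⟧(𝐗)` obtained by evaluating program `p` on the tuple of
input random variables `𝐗`. -/
def evalRV {Ω : Type*} {n : ℕ} (X : Fin n → Ω → ℝ) (p : AExp n) : Ω → ℝ :=
  fun ω => p.eval (fun i => X i ω)

/-- The fresh (last) variable `u` is influential in `p₂`: there exist values `x, u₁, u₂`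
with `⟦p₂⟧(x, u₁) ≠ ⟦p₂⟧(x, u₂)`. -/
def InfluentialLast {n : ℕ} (p₂ : AExp (n + 1)) : Prop :=
  ∃ (x : Fin n → ℝ) (u₁ u₂ : ℝ), p₂.eval (Fin.snoc x u₁) ≠ p₂.eval (Fin.snoc x u₂)

/-- Definition 4: `p` has proxy use of `Z` iff there is an influential decomposition
`(p₁, u, p₂)` of `p` such that `⟦p₁⟧(𝐗)` is a perfect proxy for `Z`. -/
def ProxyUse {Ω 𝒵 : Type*} {n : ℕ} (μ : PMF Ω) (X : Fin n → Ω → ℝ)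
    (p : AExp n) (Z : Ω → 𝒵) : Prop :=
  ∃ (p₁ : AExp n) (p₂ : AExp (n + 1)),
    p₂.subst p₁ = p ∧ InfluentialLast p₂ ∧ PerfectProxy μ (evalRV X p₁) Z

end

mutual
/-- Lift `p` to `n+1` variables, sending variable `i` to the fresh last variable. -/
def AExp.liftAt : {n : ℕ} → AExp n → Fin n → AExp (n + 1)
  | _, .const c, _ => .const c
  | _, .var j, i => if j = i then .var (Fin.last _) else .var j.castSucc
  | _, .add a b, i => .add (a.liftAt i) (b.liftAt i)
  | _, .mul a b, i => .mul (a.liftAt i) (b.liftAt i)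
  | _, .ite c a b, i => .ite (c.liftAt i) (a.liftAt i) (b.liftAt i)
def BExp.liftAt : {n : ℕ} → BExp n → Fin n → BExp (n + 1)
  | _, .tt, _ => .tt
  | _, .not b, i => .not (b.liftAt i)
  | _, .and a b, i => .and (a.liftAt i) (b.liftAt i)
  | _, .le a b, i => .le (a.liftAt i) (b.liftAt i)
end

mutual
theorem AExp.subst_liftAt : ∀ {n : ℕ} (a : AExp n) (i : Fin n),
    (a.liftAt i).subst (.var i) = a
  | _, .const _, _ => by simp [AExp.liftAt, AExp.subst]
  | _, .var j, i => by
    by_cases h : j = i <;>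
      simp [AExp.liftAt, AExp.subst, h, Fin.lastCases_last, Fin.lastCases_castSucc]
  | _, .add a b, i => by
    simp [AExp.liftAt, AExp.subst, AExp.subst_liftAt a i, AExp.subst_liftAt b i]
  | _, .mul a b, i => by
    simp [AExp.liftAt, AExp.subst, AExp.subst_liftAt a i, AExp.subst_liftAt b i]
  | _, .ite c a b, i => by
    simp [AExp.liftAt, AExp.subst, BExp.subst_liftAt c i, AExp.subst_liftAt a i,
      AExp.subst_liftAt b i]
theorem BExp.subst_liftAt : ∀ {n : ℕ} (b : BExp n) (i : Fin n),
    (b.liftAt i).subst (.var i) = b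
  | _, .tt, _ => by simp [BExp.liftAt, BExp.subst]
  | _, .not b, i => by simp [BExp.liftAt, BExp.subst, BExp.subst_liftAt b i]
  | _, .and a b, i => by
    simp [BExp.liftAt, BExp.subst, BExp.subst_liftAt a i, BExp.subst_liftAt b i]
  | _, .le a b, i => by
    simp [BExp.liftAt, BExp.subst, AExp.subst_liftAt a i, AExp.subst_liftAt b i]
end

mutual
theorem AExp.eval_liftAt : ∀ {n : ℕ} (a : AExp n) (i : Fin n) (x : Fin n → ℝ) (u : ℝ),
    (a.liftAt i).eval (Fin.snoc x u) = a.eval (Function.update x i u)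
  | _, .const _, _, _, _ => by simp [AExp.liftAt, AExp.eval]
  | _, .var j, i, x, u => by
    by_cases h : j = i <;>
      simp [AExp.liftAt, AExp.eval, h, Function.update]
  | _, .add a b, i, x, u => by
    simp [AExp.liftAt, AExp.eval, AExp.eval_liftAt a i x u, AExp.eval_liftAt b i x u]
  | _, .mul a b, i, x, u => by
    simp [AExp.liftAt, AExp.eval, AExp.eval_liftAt a i x u, AExp.eval_liftAt b i x u]
  | _, .ite c a b, i, x, u => by
    simp [AExp.liftAt, AExp.eval, BExp.eval_liftAt c i x u, AExp.eval_liftAt a i x u,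
      AExp.eval_liftAt b i x u]
theorem BExp.eval_liftAt : ∀ {n : ℕ} (b : BExp n) (i : Fin n) (x : Fin n → ℝ) (u : ℝ),
    (b.liftAt i).eval (Fin.snoc x u) = b.eval (Function.update x i u)
  | _, .tt, _, _, _ => by simp [BExp.liftAt, BExp.eval]
  | _, .not b, i, x, u => by simp [BExp.liftAt, BExp.eval, BExp.eval_liftAt b i x u]
  | _, .and a b, i, x, u => by
    simp [BExp.liftAt, BExp.eval, BExp.eval_liftAt a i x u, BExp.eval_liftAt b i x u]
  | _, .le a b, i, x, u => by
    simp [BExp.liftAt, BExp.eval, AExp.eval_liftAt a i x u, AExp.eval_liftAt b i x u]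
end

/-- **Syntactic Explicit Use**: if the variable `xᵢ` of the program `p` carries a random
variable `X i` that is a perfect proxy for `Z`, and `xᵢ` is an influential input of `p`,
then `p` has proxy use of `Z` (Definition 4). -/
theorem syntactic_explicit_use {Ω 𝒵 : Type*} {n : ℕ} (μ : PMF Ω)
    (X : Fin n → Ω → ℝ) (Z : Ω → 𝒵) (p : AExp n) (i : Fin n)
    (hproxy : PerfectProxy μ (X i) Z)
    (hinf : ∃ (x : Fin n → ℝ) (x₁ x₂ : ℝ),
      p.eval (Function.update x i x₁) ≠ p.eval (Function.update x i x₂)) :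
    ProxyUse μ X p Z := by
  obtain ⟨x, x₁, x₂, hne⟩ := hinf
  refine ⟨.var i, p.liftAt i, AExp.subst_liftAt p i, ⟨x, x₁, x₂, ?_⟩, ?_⟩
  · rw [AExp.eval_liftAt, AExp.eval_liftAt]; exact hne
  · have : evalRV X (.var i) = X i := by
      funext ω; simp [evalRV, AExp.eval]
    rw [this]; exact hproxy

end UsePrivacy
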